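/- arXiv:2506.18653 — 2 statements merged into one kernel-verified Lean document; each statement's English description precedes it below -/
import Mathlib

section
/- Let F'/F be a finite Galois extension of fields and let v : F' → ℤ ∪ {∞} be a discrete valuation on F' such that v(σ(x)) = v(x) for every σ in the Galois group Gal(F'/F) and every x ∈ F'. Let σ₁,…,σₙ be the elements of Gal(F'/F) and let f₁,…,fₙ ∈ F' satisfy f₁ ≠ 0 and v(f₁) < v(fⱼ) for all j with 2 ≤ j ≤ n. Then the F-linear endomorphism L of F' defined by L(g) = Σᵢ₌₁ⁿ fᵢ·σᵢ(g) is bijective; equivalently, its determinant as an F-linear map is nonzero. -/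
/-- Let `F'/F` be a finite Galois extension of fields and
`v : F' → ℤ ∪ {∞}` a discrete valuation on `F'` invariant under `Gal(F'/F)`.
Let `σ₁,…,σₙ` enumerate the elements of `Gal(F'/F)` and let `f₁,…,fₙ ∈ F'`
satisfy `f₁ ≠ 0` and `v f₁ < v fⱼ` for all `j ≠ 1`. Then the `F`-linear
endomorphism `L : g ↦ ∑ i, f i * σ i g` of `F'` is bijective; equivalently,
its determinant as an `F`-linear map is nonzero. -/
theorem stmt_4 (F F' : Type*) [Field F] [Field F'] [Algebra F F']
    [FiniteDimensional F F'] [IsGalois F F'] (v : F' → WithTop ℤ)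
    (hv0 : ∀ x : F', v x = ⊤ ↔ x = 0)
    (hvmul : ∀ x y : F', v (x * y) = v x + v y)
    (hvadd : ∀ x y : F', min (v x) (v y) ≤ v (x + y))
    (hGal : ∀ (τ : F' ≃ₐ[F] F') (x : F'), v (τ x) = v x)
    (n : ℕ) [NeZero n] (σ : Fin n → (F' ≃ₐ[F] F')) (hσ : Function.Bijective σ)
    (f : Fin n → F') (hf1 : f 0 ≠ 0)
    (hf : ∀ j : Fin n, j ≠ 0 → v (f 0) < v (f j))
    (L : F' →ₗ[F] F') (hL : ∀ g : F', L g = ∑ i, f i * σ i g) :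
    Function.Bijective L ∧ LinearMap.det L ≠ 0 := by
  classical
  -- strict lower bound on valuation of a sum
  have hsum : ∀ (s : Finset (Fin n)) (t : Fin n → F') (C : WithTop ℤ), C ≠ ⊤ →
      (∀ i ∈ s, C < v (t i)) → C < v (∑ i ∈ s, t i) := by
    intro s t C hC
    induction s using Finset.cons_induction with
    | empty => intro _; simp [(hv0 0).mpr rfl, lt_top_iff_ne_top, hC]
    | cons a s ha ih =>
      intro h
      rw [Finset.sum_cons]
      refine lt_of_lt_of_le ?_ (hvadd _ _)
      exact lt_min (h a (Finset.mem_cons_self a s)) (ih fun i hi => h i (Finset.mem_cons_of_mem hi))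
  have hinj : Function.Injective L := by
    rw [injective_iff_map_eq_zero]
    intro g hg
    by_contra hg0
    have hvg : v g ≠ ⊤ := fun h => hg0 ((hv0 g).mp h)
    have hvf : v (f 0) ≠ ⊤ := fun h => hf1 ((hv0 _).mp h)
    have hC : v (f 0) + v g ≠ ⊤ := by
      simp [WithTop.add_eq_top, hvf, hvg]
    have hL0 : (0 : F') = ∑ i, f i * σ i g := by rw [← hL g, hg]
    have hfirst : v (f 0 * σ 0 g) = v (f 0) + v g := by
      rw [hvmul, hGal]
    have hsplit : f 0 * σ 0 g + ∑ i ∈ Finset.univ.erase 0, f i * σ i g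
        = ∑ i, f i * σ i g := Finset.add_sum_erase _ (fun i => f i * σ i g) (Finset.mem_univ (0 : Fin n))
    have hrest : v (f 0) + v g < v (∑ i ∈ Finset.univ.erase 0, f i * σ i g) := by
      refine hsum _ _ _ hC ?_
      intro i hi
      rw [hvmul, hGal]
      exact WithTop.add_lt_add_right hvg (hf i (Finset.ne_of_mem_erase hi))
    -- v of total sum: total sum is 0, so v = ⊤, but also v total = v (f 0) + v g
    have key : v (∑ i, f i * σ i g) = v (f 0) + v g := by
      rw [← hsplit]
      have h1 : v (f 0) + v g ≤ v (f 0 * σ 0 g + ∑ i ∈ Finset.univ.erase 0, f i * σ i g) := by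
        refine le_trans ?_ (hvadd _ _)
        rw [hfirst]
        exact le_min le_rfl hrest.le
      have hv1 : v (1 : F') = 0 := by
        have h := hvmul 1 1
        rw [mul_one] at h
        have h1t : v (1:F') ≠ ⊤ := fun ht => one_ne_zero ((hv0 _).mp ht)
        lift v (1:F') to ℤ using h1t with a
        have ha : a = a + a := by exact_mod_cast h
        exact_mod_cast (by omega : a = 0)
      have hvneg : ∀ x : F', v (-x) = v x := by
        have hm1 : v (-1 : F') = 0 := by
          have h := hvmul (-1) (-1)
          rw [neg_mul_neg, one_mul, hv1] at h
          have h1t : v (-1:F') ≠ ⊤ := fun ht => (by norm_num : (-1:F') ≠ 0) ((hv0 _).mp ht)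
          lift v (-1:F') to ℤ using h1t with a
          have ha : (0:ℤ) = a + a := by exact_mod_cast h
          exact_mod_cast (by omega : a = 0)
        intro x
        rw [show -x = (-1) * x by ring, hvmul, hm1, zero_add]
      have h2 : v (f 0 * σ 0 g + ∑ i ∈ Finset.univ.erase 0, f i * σ i g) ≤ v (f 0) + v g := by
        by_contra hlt
        push_neg at hlt
        set S := ∑ i ∈ Finset.univ.erase 0, f i * σ i g with hS
        have h3 : v (f 0) + v g < v (f 0 * σ 0 g) :=
          calc v (f 0) + v g < min (v (f 0 * σ 0 g + S)) (v (-S)) := by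
                rw [hvneg]; exact lt_min hlt hrest
            _ ≤ v (f 0 * σ 0 g + S + -S) := hvadd _ _
            _ = v (f 0 * σ 0 g) := by rw [add_neg_cancel_right]
        rw [hfirst] at h3
        exact lt_irrefl _ h3
      exact le_antisymm h2 h1
    rw [← hL0, (hv0 0).mpr rfl] at key
    exact hC key.symm
  have hbij : Function.Bijective L :=
    ⟨hinj, (LinearMap.injective_iff_surjective).mp hinj⟩
  refine ⟨hbij, ?_⟩
  have := (LinearEquiv.ofBijective L hbij).isUnit_det'
  have hdet : (LinearEquiv.ofBijective L hbij : F' →ₗ[F] F') = L := rfl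
  rw [hdet] at this
  exact this.ne_zero
end

section
/- Let R be a discrete valuation ring with maximal ideal m and residue field κ = R/m, and let π : R → κ be the quotient map. Let M be an n×n matrix over R and suppose that the matrix M̄ over κ obtained by applying π entrywise has rank r over κ. Then det(M) ∈ m^(n−r). Equivalently, if v denotes the normalized additive valuation of R (with v(t) = 1 for a uniformizer t), then v(det M) ≥ n − r. -/
open IsLocalRing Matrix

/-- Let `R` be a discrete valuation ring with maximal ideal `m`
and residue field `κ = R/m`. Let `M` be an `n×n` matrix over `R` whose entrywise
reduction `M̄` mod `m` has rank `r` over `κ`. Then `det M ∈ m^(n-r)`; equivalently,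
the normalized additive valuation of `det M` is at least `n - r`. -/
theorem stmt_6 (R : Type*) [CommRing R] [IsDomain R] [IsDiscreteValuationRing R]
    (n r : ℕ) (M : Matrix (Fin n) (Fin n) R)
    (h : (M.map (IsLocalRing.residue R)).rank = r) :
    M.det ∈ (IsLocalRing.maximalIdeal R) ^ (n - r) ∧
    ((n - r : ℕ) : ℕ∞) ≤ IsDiscreteValuationRing.addVal R M.det := by
  classical
  set π := residue R with hπ
  set Mb := M.map π with hMb
  have hrn : r ≤ n := by
    have := Mb.rank_le_card_width
    simp only [Fintype.card_fin] at this
    omega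
  set d := n - r with hd
  suffices key : M.det ∈ (maximalIdeal R) ^ d by
    refine ⟨key, ?_⟩
    obtain ⟨ϖ, hϖ⟩ := IsDiscreteValuationRing.exists_irreducible R
    rw [hϖ.maximalIdeal_eq, Ideal.span_singleton_pow, Ideal.mem_span_singleton] at key
    have := IsDiscreteValuationRing.addVal_le_iff_dvd.mpr key
    rwa [hϖ.addVal_pow] at this
  rcases Nat.eq_zero_or_pos d with hd0 | hd0
  · simp [hd0]
  haveI : Nonempty (Fin n) := ⟨⟨0, by omega⟩⟩
  -- kernel of the reduction has dimension `d`
  have hrk : Module.finrank (ResidueField R) (LinearMap.range Mb.mulVecLin) = r := h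
  have hker : Module.finrank (ResidueField R) (LinearMap.ker Mb.mulVecLin) = d := by
    have := LinearMap.finrank_range_add_finrank_ker Mb.mulVecLin
    simp only [hrk, Module.finrank_pi, Fintype.card_fin] at this
    omega
  let b : Module.Basis (Fin d) (ResidueField R) (LinearMap.ker Mb.mulVecLin) :=
    Module.finBasisOfFinrankEq _ _ hker
  let v : Fin d → (Fin n → ResidueField R) := fun i => (b i : Fin n → ResidueField R)
  have hv : LinearIndependent (ResidueField R) v :=
    b.linearIndependent.map' (Submodule.subtype _) (Submodule.ker_subtype _)
  have hvker : ∀ i, Mb.mulVec (v i) = 0 := fun i => (b i).2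
  -- complement
  obtain ⟨p, hp⟩ := Submodule.exists_isCompl (Submodule.span (ResidueField R) (Set.range v))
  have hfp : Module.finrank (ResidueField R) p = r := by
    have h1 := Submodule.finrank_add_eq_of_isCompl hp
    have h2 : Module.finrank (ResidueField R) (Submodule.span (ResidueField R) (Set.range v)) = d := by
      rw [finrank_span_eq_card hv, Fintype.card_fin]
    simp only [h2, Module.finrank_pi, Fintype.card_fin] at h1
    omega
  let w : Module.Basis (Fin r) (ResidueField R) p := Module.finBasisOfFinrankEq _ _ hfp
  let u : Fin d ⊕ Fin r → (Fin n → ResidueField R) :=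
    Sum.elim v fun j => (w j : Fin n → ResidueField R)
  have hw : LinearIndependent (ResidueField R) fun j => (w j : Fin n → ResidueField R) :=
    w.linearIndependent.map' (Submodule.subtype _) (Submodule.ker_subtype _)
  have hu : LinearIndependent (ResidueField R) u := by
    refine hv.sum_type hw (hp.disjoint.mono_right ?_)
    rw [Submodule.span_le]
    rintro x ⟨j, rfl⟩
    exact (w j).2
  let e : Fin d ⊕ Fin r ≃ Fin n := finSumFinEquiv.trans (finCongr (by omega))
  have hu' : LinearIndependent (ResidueField R) (u ∘ e.symm) := hu.comp e.symm e.symm.injective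
  let B : Module.Basis (Fin n) (ResidueField R) (Fin n → ResidueField R) :=
    basisOfLinearIndependentOfCardEqFinrank hu' (by simp)
  have hB : ∀ i, B i = u (e.symm i) := fun i => by
    simp [B, coe_basisOfLinearIndependentOfCardEqFinrank]
  let V : Matrix (Fin n) (Fin n) (ResidueField R) := (Pi.basisFun (ResidueField R) (Fin n)).toMatrix B
  have hV : ∀ i j, V i j = B j i := fun i j => by
    simp [V, Module.Basis.toMatrix_apply]
  have hVunit : IsUnit V.det := by
    have : Invertible V := (Pi.basisFun (ResidueField R) (Fin n)).invertibleToMatrix B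
    exact (isUnit_of_invertible V).map Matrix.detMonoidHom
  -- lift V to R
  have hsurj : Function.Surjective π := Ideal.Quotient.mk_surjective
  let W : Matrix (Fin n) (Fin n) R := fun i j => Function.surjInv hsurj (V i j)
  have hW : W.map π = V := by
    ext i j
    exact Function.surjInv_eq hsurj (V i j)
  have hWunit : IsUnit W.det := by
    by_contra hc
    have hmem : W.det ∈ maximalIdeal R := hc
    have h0 : π W.det = V.det := by
      rw [← hW]; exact RingHom.map_det π W
    have : π W.det = 0 := Ideal.Quotient.eq_zero_iff_mem.mpr hmem
    rw [this] at h0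
    rw [← h0] at hVunit
    exact not_isUnit_zero hVunit
  -- the product
  set N := M * W with hN
  have hcol : ∀ (j : Fin d) (i : Fin n), N i (e (Sum.inl j)) ∈ maximalIdeal R := by
    intro j i
    rw [← Ideal.Quotient.eq_zero_iff_mem]
    show π (N i (e (Sum.inl j))) = 0
    have h1 : N.map π = Mb * V := by rw [hN, Matrix.map_mul, hW, hMb]
    have h2 : π (N i (e (Sum.inl j))) = (Mb * V) i (e (Sum.inl j)) := by
      rw [← h1]; rfl
    rw [h2, Matrix.mul_apply]
    have h3 : (fun k => V k (e (Sum.inl j))) = v j := by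
      funext k
      rw [hV, hB, Equiv.symm_apply_apply]
      rfl
    calc ∑ k, Mb i k * V k (e (Sum.inl j)) = Mb.mulVec (v j) i := by
          rw [← h3]; rfl
      _ = 0 := by rw [hvker j]; rfl
  -- determinant of N lies in m^d
  have hNdet : N.det ∈ (maximalIdeal R) ^ d := by
    rw [Matrix.det_apply]
    refine Ideal.sum_mem _ fun σ _ => zsmul_mem ?_ _
    set S : Finset (Fin n) := Finset.univ.image fun j : Fin d => e (Sum.inl j) with hS
    have hcard : S.card = d := by
      rw [hS, Finset.card_image_of_injective _ fun a b hab =>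
        Sum.inl_injective (e.injective hab), Finset.card_univ, Fintype.card_fin]
    have hsplit : (∏ i ∈ S, N (σ i) i) * ∏ i ∈ Sᶜ, N (σ i) i = ∏ i, N (σ i) i :=
      Finset.prod_mul_prod_compl S _
    rw [← hsplit]
    refine Ideal.mul_mem_right _ _ ?_
    have : ∏ i ∈ S, N (σ i) i ∈ ∏ _i ∈ S, maximalIdeal R := by
      refine Ideal.prod_mem_prod fun i hi => ?_
      rw [hS] at hi
      obtain ⟨j, _, rfl⟩ := Finset.mem_image.mp hi
      exact hcol j (σ _)
    rwa [Finset.prod_const, hcard] at this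
  -- conclude for M
  obtain ⟨wu, hwu⟩ := hWunit
  have : M.det = N.det * (↑wu⁻¹ : R) := by
    rw [hN, Matrix.det_mul, ← hwu, mul_assoc, ← Units.val_mul, mul_inv_cancel, Units.val_one,
      mul_one]
  rw [this]
  exact Ideal.mul_mem_right _ _ hNdet
end
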